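/- For every positive integer n, the sum over all binary trees T with n vertices of the product, over all vertices v of T, of 1/((2h_v + 1) · 2^{2h_v - 1}) equals 1/(2n + 1)!, where h_v denotes the hook length of v in T. -/

import Mathlib

/-- The product over all vertices `v` of a binary tree of `f h_v`, where `h_v` is the
hook length of `v`, i.e. the number of vertices of the subtree rooted at `v`. -/
def hookProd (f : ℕ → ℚ) : Tree Unit → ℚ
  | BinaryTree.nil => 1
  | BinaryTree.node _ l r =>
      f (l.numNodes + r.numNodes + 1) * hookProd f l * hookProd f r

/-!
Splitting a tree at its root, the hook sum `S n = ∑_{|T| = n} ∏_v f h_v` satisfies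
`S (n + 1) = f (n + 1) * ∑_{i + j = n} S i * S j`. For `f h = 1 / ((2h + 1) 2^(2h - 1))` the
sequence `S n = 1 / (2n + 1)!` solves this recursion, because
`∑_{i + j = n} (2n + 2)! / ((2i + 1)! (2j + 1)!)` is the sum of the odd-index binomial
coefficients of order `2n + 2`, namely `2^(2n + 1)`.
-/

open Finset Nat BinaryTree

theorem Finset.sum_range_two_mul {M : Type*} [AddCommMonoid M] (f : ℕ → M) (m : ℕ) :
    ∑ i ∈ range (2 * m), f i = ∑ k ∈ range m, (f (2 * k) + f (2 * k + 1)) := by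
  induction m with
  | zero => simp
  | succ m ih =>
    rw [show 2 * (m + 1) = 2 * m + 1 + 1 by ring, sum_range_succ, sum_range_succ,
      sum_range_succ, ih, add_assoc]

theorem Nat.sum_range_choose_odd (m : ℕ) :
    ∑ k ∈ range (m + 1), (2 * m + 2).choose (2 * k + 1) = 2 ^ (2 * m + 1) := by
  calc ∑ k ∈ range (m + 1), (2 * m + 2).choose (2 * k + 1)
      = ∑ k ∈ range (m + 1), ((2 * m + 1).choose (2 * k) + (2 * m + 1).choose (2 * k + 1)) :=
        sum_congr rfl fun k _ => choose_succ_succ' _ _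
    _ = ∑ i ∈ range (2 * m + 1 + 1), (2 * m + 1).choose i := by
        rw [← sum_range_two_mul, mul_add, mul_one]
    _ = 2 ^ (2 * m + 1) := sum_range_choose _

theorem sum_antidiagonal_inv_factorial_odd_mul {K : Type*} [Field K] [CharZero K] (n : ℕ) :
    ∑ ij ∈ antidiagonal n, ((2 * ij.1 + 1)! : K)⁻¹ * ((2 * ij.2 + 1)! : K)⁻¹
      = 2 ^ (2 * n + 1) / ((2 * n + 2)! : K) := by
  have hterm : ∀ ij ∈ antidiagonal n, ((2 * ij.1 + 1)! : K)⁻¹ * ((2 * ij.2 + 1)! : K)⁻¹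
      = ((2 * n + 2).choose (2 * ij.1 + 1) : K) / ((2 * n + 2)! : K) := by
    rintro ⟨i, j⟩ hij
    rw [HasAntidiagonal.mem_antidiagonal] at hij
    rw [show 2 * n + 2 = (2 * i + 1) + (2 * j + 1) by omega, cast_add_choose]
    have : ((2 * i + 1 + (2 * j + 1))! : K) ≠ 0 := cast_ne_zero.mpr (factorial_ne_zero _)
    field_simp
  rw [sum_congr rfl hterm, ← sum_div, Nat.sum_antidiagonal_eq_sum_range_succ_mk]
  exact_mod_cast congrArg (fun s : ℕ => (s : K) / ((2 * n + 2)! : K)) (sum_range_choose_odd n)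

def hookSum (f : ℕ → ℚ) (n : ℕ) : ℚ :=
  ∑ T ∈ treesOfNumNodesEq n, hookProd f T

theorem hookSum_zero (f : ℕ → ℚ) : hookSum f 0 = 1 := by
  simp [hookSum, hookProd]

theorem pairwiseDisjoint_pairwiseNode_treesOfNumNodesEq (n : ℕ) :
    (antidiagonal n : Set (ℕ × ℕ)).PairwiseDisjoint
      fun ij => pairwiseNode (treesOfNumNodesEq ij.1) (treesOfNumNodesEq ij.2) := by
  intro ij _ ij' _ hne
  rw [Function.onFun, disjoint_left]
  rintro _ hx hy
  obtain ⟨⟨l, r⟩, hlr, rfl⟩ := mem_map.mp hx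
  obtain ⟨⟨l', r'⟩, hlr', he⟩ := mem_map.mp hy
  obtain ⟨-, rfl, rfl⟩ := node.inj he
  simp only [mem_product, mem_treesOfNumNodesEq] at hlr hlr'
  exact hne (Prod.ext (hlr.1.symm.trans hlr'.1) (hlr.2.symm.trans hlr'.2))

theorem hookSum_succ (f : ℕ → ℚ) (n : ℕ) :
    hookSum f (n + 1) = f (n + 1) * ∑ ij ∈ antidiagonal n, hookSum f ij.1 * hookSum f ij.2 := by
  rw [hookSum, treesOfNumNodesEq_succ, sum_biUnion, mul_sum]
  · refine sum_congr rfl ?_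
    rintro ⟨i, j⟩ hij
    simp only [HasAntidiagonal.mem_antidiagonal] at hij
    rw [sum_map, sum_product, hookSum, hookSum, sum_mul_sum, mul_sum]
    refine sum_congr rfl fun l hl => ?_
    rw [mul_sum]
    refine sum_congr rfl fun r hr => ?_
    rw [mem_treesOfNumNodesEq] at hl hr
    change hookProd f (node () l r) = _
    rw [hookProd, hl, hr, hij, mul_assoc]
  · exact pairwiseDisjoint_pairwiseNode_treesOfNumNodesEq n

theorem hookSum_eq_inv_factorial (n : ℕ) :
    hookSum (fun h => 1 / ((2 * h + 1 : ℚ) * 2 ^ (2 * h - 1))) n = ((2 * n + 1)! : ℚ)⁻¹ := by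
  set f : ℕ → ℚ := fun h => 1 / ((2 * h + 1 : ℚ) * 2 ^ (2 * h - 1))
  induction n using Nat.strong_induction_on with
  | _ n ih =>
    rcases n with _ | n
    · simp [hookSum_zero]
    have hsum : ∑ ij ∈ antidiagonal n, hookSum f ij.1 * hookSum f ij.2
        = ∑ ij ∈ antidiagonal n, ((2 * ij.1 + 1)! : ℚ)⁻¹ * ((2 * ij.2 + 1)! : ℚ)⁻¹ :=
      sum_congr rfl fun ⟨i, j⟩ hij => by
        rw [HasAntidiagonal.mem_antidiagonal] at hij
        rw [ih i (by omega), ih j (by omega)]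
    rw [hookSum_succ, hsum, sum_antidiagonal_inv_factorial_odd_mul]
    dsimp only [f]
    rw [show 2 * (n + 1) - 1 = 2 * n + 1 by omega,
      show 2 * (n + 1) + 1 = 2 * n + 2 + 1 by ring, factorial_succ (2 * n + 2)]
    push_cast
    field_simp

theorem han_formula_two_general (n : ℕ) :
    ∑ T ∈ Tree.treesOfNumNodesEq n,
      hookProd (fun h => 1 / ((2 * h + 1 : ℚ) * 2 ^ (2 * h - 1))) T
      = 1 / ((2 * n + 1).factorial : ℚ) := by
  rw [one_div]
  exact hookSum_eq_inv_factorial n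

theorem han_formula_two (n : ℕ) (hn : 0 < n) :
    ∑ T ∈ Tree.treesOfNumNodesEq n,
      hookProd (fun h => 1 / ((2 * h + 1 : ℚ) * 2 ^ (2 * h - 1))) T
      = 1 / ((2 * n + 1).factorial : ℚ) :=
  han_formula_two_general n
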